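/- Let P be a linkage and H a subgraph of a graph G, and let R be an H–P comb. Then for any sublinkage P' of P, the set R' of those paths in R that share an endpoint with some (R,H)-segment of a path in P' is an H–P' comb. -/
import Mathlib


open SimpleGraph

section Defs
variable {V : Type*}

/-- `G` has a `K_p` minor: `p` disjoint nonempty connected branch sets pairwise joined by edges. -/
def HasCliqueMinor (G : SimpleGraph V) (p : ℕ) : Prop :=
  ∃ B : Fin p → Set V,
    (∀ i, (B i).Nonempty) ∧
    (∀ i, (G.induce (B i)).Connected) ∧
    (Pairwise fun i j => Disjoint (B i) (B j)) ∧
    (Pairwise fun i j => ∃ u ∈ B i, ∃ v ∈ B j, G.Adj u v)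

/-- `G` contains `k` pairwise vertex-disjoint instances of a `K_p` minor. -/
def HasDisjointCliqueMinors (G : SimpleGraph V) (p k : ℕ) : Prop :=
  ∃ S : Fin k → Set V,
    (Pairwise fun i j => Disjoint (S i) (S j)) ∧
    ∀ i, HasCliqueMinor (G.induce (S i)) p

/-- `H` is a minor of `G` (branch-set / minor-model definition). -/
def HasMinor {W : Type*} (G : SimpleGraph V) (H : SimpleGraph W) : Prop :=
  ∃ B : W → Set V,
    (∀ w, (B w).Nonempty) ∧
    (∀ w, (G.induce (B w)).Connected) ∧
    (Pairwise fun w w' => Disjoint (B w) (B w')) ∧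
    (∀ w w', H.Adj w w' → ∃ u ∈ B w, ∃ v ∈ B w', G.Adj u v)

/-- `(Gt, W)` is a tree decomposition of `G`. -/
def IsTreeDecomp {T : Type*} (G : SimpleGraph V) (Gt : SimpleGraph T) (W : T → Set V) : Prop :=
  Gt.IsTree ∧
  (∀ v : V, ∃ t, v ∈ W t) ∧
  (∀ u v : V, G.Adj u v → ∃ t, u ∈ W t ∧ v ∈ W t) ∧
  (∀ v : V, (Gt.induce {t | v ∈ W t}).Connected)

/-- `G` has tree-width `< w`, i.e. a tree decomposition with all bags of size `≤ w`. -/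
def TreewidthLt (G : SimpleGraph V) (w : ℕ) : Prop :=
  ∃ (T : Type) (Gt : SimpleGraph T) (W : T → Set V),
    IsTreeDecomp G Gt W ∧ ∀ t, (W t).Finite ∧ (W t).ncard ≤ w

/-- `G` has path-width at most `w`. -/
def PathwidthLe (G : SimpleGraph V) (w : ℕ) : Prop :=
  ∃ (n : ℕ) (W : Fin (n+1) → Set V),
    (∀ v, ∃ i, v ∈ W i) ∧
    (∀ u v, G.Adj u v → ∃ i, u ∈ W i ∧ v ∈ W i) ∧
    (∀ v (i j k : Fin (n+1)), i ≤ j → j ≤ k → v ∈ W i → v ∈ W k → v ∈ W j) ∧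
    (∀ i, (W i).Finite ∧ (W i).ncard ≤ w + 1)

/-- An `X`–`Y` linkage of order `t` in `G`: `t` disjoint `X`–`Y` paths meeting all of `X ∪ Y`. -/
structure Linkage (G : SimpleGraph V) (X Y : Set V) (t : ℕ) where
  first : Fin t → V
  last : Fin t → V
  walk : ∀ i, G.Walk (first i) (last i)
  isPath : ∀ i, (walk i).IsPath
  firstMem : ∀ i, first i ∈ X
  lastMem : ∀ i, last i ∈ Y
  innerCond : ∀ i v, v ∈ (walk i).support → v ∈ X ∪ Y → v = first i ∨ v = last i
  disjointCond : ∀ i j, i ≠ j → ∀ v, v ∈ (walk i).support → v ∉ (walk j).support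
  coverX : ∀ x ∈ X, ∃ i, first i = x
  coverY : ∀ y ∈ Y, ∃ i, last i = y

/-- The collection of vertex sets of the paths of a linkage. -/
def Linkage.pathSets {G : SimpleGraph V} {X Y : Set V} {t : ℕ} (L : Linkage G X Y t) :
    Set (Set V) := {s | ∃ i, s = {v | v ∈ (L.walk i).support}}

/-- A linkage is singular if it covers all of `V(G)` and `G` has no other `X`–`Y` linkage. -/
def Linkage.Singular {G : SimpleGraph V} {X Y : Set V} {t : ℕ} (L : Linkage G X Y t) : Prop :=
  (∀ v : V, ∃ i, v ∈ (L.walk i).support) ∧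
  ∀ (t' : ℕ) (L' : Linkage G X Y t'), L'.pathSets = L.pathSets

/-- A cycle in `G`. -/
structure CycleIn (G : SimpleGraph V) where
  base : V
  walk : G.Walk base base
  isCycle : walk.IsCycle

def CycleIn.verts {G : SimpleGraph V} (C : CycleIn G) : Set V := {v | v ∈ C.walk.support}

/-- Concentric cycles: pairwise disjoint, and each middle cycle separates inner from outer. -/
def Concentric {G : SimpleGraph V} {s : ℕ} (C : Fin s → CycleIn G) : Prop :=
  (Pairwise fun i j => Disjoint (C i).verts (C j).verts) ∧
  ∀ (i j k : Fin s), i < j → j < k →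
    ∀ (u v : V), u ∈ (C i).verts → v ∈ (C k).verts →
      ∀ w : G.Walk u v, ∃ x ∈ (C j).verts, x ∈ w.support

/-- A walk is orthogonal to the (vertex sets of) cycles `D 1, …, D s`: it meets each `D i` in a
nonempty contiguous segment, and these segments appear in order (or in reverse order). -/
def WalkOrthS {G : SimpleGraph V} {x y : V} (w : G.Walk x y) {s : ℕ}
    (D : Fin s → Set V) : Prop :=
  ∃ a b : Fin s → ℕ,
    (∀ i, a i ≤ b i) ∧ (∀ i, b i < w.support.length) ∧
    ((∀ i j : Fin s, i < j → b i < a j) ∨ (∀ i j : Fin s, i < j → b j < a i)) ∧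
    (∀ (i : Fin s) (n : ℕ) (hn : n < w.support.length),
      w.support.get ⟨n, hn⟩ ∈ D i ↔ (a i ≤ n ∧ n ≤ b i))

/-- `v` is the first vertex of the list `l` lying in `S`. -/
def firstIn (l : List V) (S : Set V) (v : V) : Prop :=
  ∃ l₁ l₂, l = l₁ ++ v :: l₂ ∧ v ∈ S ∧ ∀ u ∈ l₁, u ∉ S

/-- An `A`–`L` comb (`A` playing the role of the vertex set of the subgraph `H`): disjoint paths
starting in `A` (with no further vertex in `A`) and ending on `⋃ L`, such that the set of
endvertices of the `(Q,H)`-segments of the paths of `L` equals the set of last vertices. -/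
structure Comb {G : SimpleGraph V} {X Y : Set V} {t : ℕ}
    (A : Set V) (L : Linkage G X Y t) (m : ℕ) where
  first : Fin m → V
  last : Fin m → V
  walk : ∀ i, G.Walk (first i) (last i)
  isPath : ∀ i, (walk i).IsPath
  firstMem : ∀ i, first i ∈ A
  onlyFirstInA : ∀ i v, v ∈ (walk i).support → v ∈ A → v = first i
  endsOnL : ∀ i, ∃ j, last i ∈ (L.walk j).support
  disjointCond : ∀ i j, i ≠ j → ∀ v, v ∈ (walk i).support → v ∉ (walk j).support
  combCond :
    {v | ∃ j, firstIn ((L.walk j).support) ((⋃ i, {u | u ∈ (walk i).support}) ∪ A) v ∨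
          firstIn ((L.walk j).support).reverse ((⋃ i, {u | u ∈ (walk i).support}) ∪ A) v}
      = Set.range last

/-- `G` is `m`-connected. -/
def IsKConnected (G : SimpleGraph V) (m : ℕ) : Prop :=
  m < Nat.card V ∧ ∀ S : Set V, S.Finite → S.ncard < m → (G.induce Sᶜ).Connected

end Defs

section Fans

/-- Adjacency of the fan `F(l,n)`: the ladder `L(l)` on the `u`- and `v`-paths together with
`n` independent vertices joined to all of the `v`-path. -/
def fanAdj (l n : ℕ) : (Fin l ⊕ (Fin l ⊕ Fin n)) → (Fin l ⊕ (Fin l ⊕ Fin n)) → Prop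
  | Sum.inl i, Sum.inl j => i.val + 1 = j.val
  | Sum.inl i, Sum.inr (Sum.inl j) => i = j
  | Sum.inr (Sum.inl i), Sum.inr (Sum.inl j) => i.val + 1 = j.val
  | Sum.inr (Sum.inl _), Sum.inr (Sum.inr _) => True
  | _, _ => False

/-- The fan `F(l, n)`. -/
def fanGraph (l n : ℕ) : SimpleGraph (Fin l ⊕ (Fin l ⊕ Fin n)) :=
  SimpleGraph.fromRel (fanAdj l n)

/-- The `n × n` grid graph. -/
def gridGraph (n : ℕ) : SimpleGraph (Fin n × Fin n) :=
  SimpleGraph.fromRel (fun a b =>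
    (a.1 = b.1 ∧ a.2.val + 1 = b.2.val) ∨ (a.2 = b.2 ∧ a.1.val + 1 = b.1.val))

end Fans

section Embed
variable {V : Type*} [Fintype V] [DecidableEq V]

/-- Reversal of darts, as a permutation. -/
def dartRev (G : SimpleGraph V) : Equiv.Perm G.Dart :=
  ⟨SimpleGraph.Dart.symm, SimpleGraph.Dart.symm,
    fun d => SimpleGraph.Dart.symm_symm d, fun d => SimpleGraph.Dart.symm_symm d⟩

/-- The Euler characteristic of the (orientable) combinatorial embedding of `G` given by the
rotation system `ρ`: `n - e + f`, corrected so that all components live in one surface. -/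
noncomputable def eulerChar (G : SimpleGraph V) [DecidableRel G.Adj]
    (ρ : Equiv.Perm G.Dart) : ℤ :=
  (Fintype.card V : ℤ) - (G.edgeFinset.card : ℤ)
    + (Nat.card (Quotient (MulAction.orbitRel
        (Subgroup.zpowers ((dartRev G).trans ρ)) G.Dart)) : ℤ)
    - 2 * ((Nat.card G.ConnectedComponent : ℤ) - 1)

/-- `G` is embeddable in an (orientable) surface of Euler characteristic `χ`: it has a rotation
system (a permutation of the darts preserving tails) whose Euler characteristic is at least `χ`. -/
def EmbeddableEuler (G : SimpleGraph V) [DecidableRel G.Adj] (χ : ℤ) : Prop :=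
  ∃ ρ : Equiv.Perm G.Dart, (∀ d : G.Dart, (ρ d).toProd.1 = d.toProd.1) ∧ χ ≤ eulerChar G ρ

end Embed


section FirstInLemmas
variable {V : Type*}

lemma firstIn_cons {a : V} {l : List V} {S : Set V} {v : V} :
    firstIn (a :: l) S v ↔ (a ∈ S ∧ v = a) ∨ (a ∉ S ∧ firstIn l S v) := by
  constructor
  · rintro ⟨l₁, l₂, h, hv, hdis⟩
    cases l₁ with
    | nil =>
      simp only [List.nil_append, List.cons.injEq] at h
      exact Or.inl ⟨h.1 ▸ hv, h.1.symm⟩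
    | cons b l₁' =>
      simp only [List.cons_append, List.cons.injEq] at h
      refine Or.inr ⟨h.1 ▸ hdis b (by simp), l₁', l₂, h.2, hv,
        fun u hu => hdis u (by simp [hu])⟩
  · rintro (⟨ha, rfl⟩ | ⟨ha, l₁, l₂, rfl, hv, hdis⟩)
    · exact ⟨[], l, by simp, ha, by simp⟩
    · refine ⟨a :: l₁, l₂, by simp, hv, ?_⟩
      rintro u hu
      rcases List.mem_cons.1 hu with rfl | h
      · exact ha
      · exact hdis u h

lemma firstIn_mem {l : List V} {S : Set V} {v : V} (h : firstIn l S v) : v ∈ l := by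
  obtain ⟨l₁, l₂, rfl, -, -⟩ := h; simp

lemma firstIn_memS {l : List V} {S : Set V} {v : V} (h : firstIn l S v) : v ∈ S := by
  obtain ⟨l₁, l₂, rfl, hv, -⟩ := h; exact hv

lemma firstIn_unique {l : List V} {S : Set V} {v w : V}
    (hv : firstIn l S v) (hw : firstIn l S w) : v = w := by
  induction l with
  | nil => obtain ⟨l₁, l₂, h, -, -⟩ := hv; exact absurd h (by simp)
  | cons a l ih =>
    rcases firstIn_cons.1 hv with ⟨ha, rfl⟩ | ⟨ha, hv'⟩ <;>
      rcases firstIn_cons.1 hw with ⟨ha', rfl⟩ | ⟨ha', hw'⟩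
    · rfl
    · exact absurd ha ha'
    · exact absurd ha' ha
    · exact ih hv' hw'

lemma firstIn_mono {l : List V} {S S' : Set V} {v : V} (hss : S' ⊆ S)
    (h : firstIn l S v) (hv : v ∈ S') : firstIn l S' v := by
  obtain ⟨l₁, l₂, rfl, -, hdis⟩ := h
  exact ⟨l₁, l₂, rfl, hv, fun u hu hu' => hdis u hu (hss hu')⟩

lemma firstIn_exists {l : List V} {S : Set V} {v : V} (hl : v ∈ l) (hv : v ∈ S) :
    ∃ w, firstIn l S w := by
  induction l with
  | nil => simp at hl
  | cons a l ih =>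
    by_cases ha : a ∈ S
    · exact ⟨a, firstIn_cons.2 (Or.inl ⟨ha, rfl⟩)⟩
    · rcases List.mem_cons.1 hl with rfl | hl'
      · exact absurd hv ha
      · obtain ⟨w, hw⟩ := ih hl'
        exact ⟨w, firstIn_cons.2 (Or.inr ⟨ha, hw⟩)⟩

end FirstInLemmas

/-- A comb restricted to the paths sharing an endpoint with an `(R,H)`-segment of a
path of a sublinkage `L'` of `L` is again an `H`–`L'` comb. -/
theorem stmt7 {V : Type} {G : SimpleGraph V} {X Y X' Y' : Set V} {t t' : ℕ}
    (L : Linkage G X Y t) (A : Set V) {m : ℕ} (C : Comb A L m)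
    (ι : Fin t' ↪ Fin t) (L' : Linkage G X' Y' t')
    (hsub : ∀ i : Fin t', ∃ (h1 : L.first (ι i) = L'.first i) (h2 : L.last (ι i) = L'.last i),
      L'.walk i = ((L.walk (ι i)).copy h1 h2)) :
    ∃ (m' : ℕ) (C' : Comb A L' m'),
      (∀ i : Fin m', ∃ j : Fin m, ∃ (h1 : C.first j = C'.first i) (h2 : C.last j = C'.last i),
        C'.walk i = ((C.walk j).copy h1 h2)) ∧
      Set.range C'.last =
        {v ∈ Set.range C.last | ∃ i : Fin t',
          firstIn ((L.walk (ι i)).support) ((⋃ j, {u | u ∈ (C.walk j).support}) ∪ A) v ∨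
          firstIn ((L.walk (ι i)).support).reverse
            ((⋃ j, {u | u ∈ (C.walk j).support}) ∪ A) v} := by
  classical
  set S : Set V := (⋃ j, {u | u ∈ (C.walk j).support}) ∪ A with hS
  set sel : Fin m → Prop := fun j => ∃ i : Fin t',
      firstIn ((L.walk (ι i)).support) S (C.last j) ∨
      firstIn ((L.walk (ι i)).support).reverse S (C.last j) with hsel
  set s : Finset (Fin m) := Finset.univ.filter sel with hs
  have hsel_mem : ∀ j, j ∈ s ↔ sel j := by intro j; simp [hs]
  let e : Fin s.card ≃ s := s.equivFin.symm
  let f : Fin s.card → Fin m := fun i => (e i : Fin m)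
  have hf_mem : ∀ i, f i ∈ s := fun i => (e i).2
  have hf_inj : Function.Injective f := fun i j h => e.injective (Subtype.ext h)
  have hf_surj : ∀ j ∈ s, ∃ i, f i = j := fun j hj =>
    ⟨e.symm ⟨j, hj⟩, by simp [f]⟩
  have hLsupp : ∀ i : Fin t', (L'.walk i).support = (L.walk (ι i)).support := by
    intro i; obtain ⟨h1, h2, hw⟩ := hsub i
    rw [hw, SimpleGraph.Walk.support_copy]
  set S' : Set V := (⋃ i : Fin s.card, {u | u ∈ (C.walk (f i)).support}) ∪ A with hS'
  have hS'S : S' ⊆ S := by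
    apply Set.union_subset_union_left
    exact Set.iUnion_subset fun i =>
      Set.subset_iUnion (fun j => {u | u ∈ (C.walk j).support}) (f i)
  have key : ∀ j ∈ s, C.last j ∈ S' := by
    intro j hj
    obtain ⟨i, rfl⟩ := hf_surj j hj
    exact Or.inl (Set.mem_iUnion.2 ⟨i, (C.walk (f i)).end_mem_support⟩)
  have main : ∀ (i : Fin t') (l : List V),
      (l = (L.walk (ι i)).support ∨ l = (L.walk (ι i)).support.reverse) →
      ∀ v, firstIn l S' v → ∃ j ∈ s, C.last j = v := by
    intro i l hl v hv
    obtain ⟨w, hw⟩ := firstIn_exists (firstIn_mem hv) (hS'S (firstIn_memS hv))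
    have hwrange : w ∈ Set.range C.last := by
      rw [← C.combCond]
      exact ⟨ι i, by rcases hl with rfl | rfl; exacts [Or.inl hw, Or.inr hw]⟩
    obtain ⟨j, hj⟩ := hwrange
    have hjs : j ∈ s := (hsel_mem j).2
      ⟨i, by rcases hl with rfl | rfl
             exacts [Or.inl (hj ▸ hw), Or.inr (hj ▸ hw)]⟩
    have := firstIn_unique hv (firstIn_mono hS'S hw (hj ▸ key j hjs))
    exact ⟨j, hjs, hj.trans this.symm⟩
  have back : ∀ j ∈ s, ∃ i : Fin t',
      firstIn ((L.walk (ι i)).support) S' (C.last j) ∨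
      firstIn ((L.walk (ι i)).support).reverse S' (C.last j) := by
    intro j hj
    obtain ⟨i, h | h⟩ := (hsel_mem j).1 hj
    · exact ⟨i, Or.inl (firstIn_mono hS'S h (key j hj))⟩
    · exact ⟨i, Or.inr (firstIn_mono hS'S h (key j hj))⟩
  refine ⟨s.card,
    { first := fun i => C.first (f i)
      last := fun i => C.last (f i)
      walk := fun i => C.walk (f i)
      isPath := fun i => C.isPath (f i)
      firstMem := fun i => C.firstMem (f i)
      onlyFirstInA := fun i v hv hva => C.onlyFirstInA (f i) v hv hva
      endsOnL := fun i => by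
        obtain ⟨i₀, h⟩ := (hsel_mem (f i)).1 (hf_mem i)
        refine ⟨i₀, ?_⟩
        rw [hLsupp]
        rcases h with h | h
        · exact firstIn_mem h
        · exact List.mem_reverse.1 (firstIn_mem h)
      disjointCond := fun i j hij v hv =>
        C.disjointCond (f i) (f j) (fun h => hij (hf_inj h)) v hv
      combCond := by
        ext v
        simp only [Set.mem_setOf_eq, Set.mem_range]
        constructor
        · rintro ⟨i, h | h⟩
          · rw [hLsupp] at h
            obtain ⟨j, hjs, hjlast⟩ := main i _ (Or.inl rfl) v h
            obtain ⟨k, rfl⟩ := hf_surj j hjs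
            exact ⟨k, hjlast⟩
          · rw [hLsupp] at h
            obtain ⟨j, hjs, hjlast⟩ := main i _ (Or.inr rfl) v h
            obtain ⟨k, rfl⟩ := hf_surj j hjs
            exact ⟨k, hjlast⟩
        · rintro ⟨k, rfl⟩
          obtain ⟨i, h⟩ := back (f k) (hf_mem k)
          refine ⟨i, ?_⟩
          rw [hLsupp]
          exact h }, ?_, ?_⟩
  · intro i
    exact ⟨f i, rfl, rfl, ((C.walk (f i)).copy_rfl_rfl).symm⟩
  · ext v
    simp only [Set.mem_range, Set.mem_setOf_eq]
    constructor
    · rintro ⟨k, rfl⟩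
      exact ⟨⟨f k, rfl⟩, (hsel_mem (f k)).1 (hf_mem k)⟩
    · rintro ⟨⟨j, rfl⟩, hcond⟩
      obtain ⟨k, hk⟩ := hf_surj j ((hsel_mem j).2 hcond)
      exact ⟨k, by rw [hk]⟩
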